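/- Let f : ℝⁿ → ℝ be a lower semicontinuous level convex function and ξ₀ ∈ ℝⁿ. Then f is strictly level convex at ξ₀ in at least one direction if and only if ξ₀ belongs to the topological boundary of the sublevel set L_{f(ξ₀)}(f) := {ξ ∈ ℝⁿ : f(ξ) ≤ f(ξ₀)}. -/

import Mathlib

open Set

/-- A function on `ℝⁿ` is *level convex* if
`f (t ξ + (1-t) η) ≤ max (f ξ) (f η)` for all `ξ, η` and `t ∈ [0,1]`. -/
def LevelConvex {n : ℕ} (f : EuclideanSpace ℝ (Fin n) → ℝ) : Prop :=
  ∀ ξ η : EuclideanSpace ℝ (Fin n), ∀ t ∈ Set.Icc (0 : ℝ) 1,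
    f (t • ξ + (1 - t) • η) ≤ max (f ξ) (f η)

/-- A level convex `f : ℝⁿ → ℝ` is *strictly level convex at `ξ₀` in at least one
direction* if there is `α ≠ 0` such that whenever `ξ₀ = t γ + (1-t) η` with `t ∈ (0,1)`
and `f ξ₀ = max (f γ) (f η)`, one has `⟨γ - η, α⟩ = 0`. -/
def StrictLevelConvexAtInOneDirection {n : ℕ}
    (f : EuclideanSpace ℝ (Fin n) → ℝ) (ξ₀ : EuclideanSpace ℝ (Fin n)) : Prop :=
  ∃ α : EuclideanSpace ℝ (Fin n), α ≠ 0 ∧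
    ∀ (γ η : EuclideanSpace ℝ (Fin n)), ∀ t ∈ Set.Ioo (0 : ℝ) 1,
      ξ₀ = t • γ + (1 - t) • η → f ξ₀ = max (f γ) (f η) →
      (inner ℝ (γ - η) α : ℝ) = 0

/-!
A sublevel set `L = {ξ | f ξ ≤ f ξ₀}` of a level convex function is convex and contains `ξ₀`, so
`ξ₀` lies on its frontier exactly when it is not an interior point. If it is interior, the segment
`[ξ₀ - δα, ξ₀ + δα]` lies in `L` for small `δ > 0`, and its endpoints violate strict level convexity
in direction `α`. If it is not, a supporting hyperplane `⟪· - ξ₀, α⟫ ≤ 0` of `L` at `ξ₀` exists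
(Hahn–Banach when `L` has interior points, the normal of its proper affine span otherwise); every
decomposition `ξ₀ = tγ + (1-t)η` with `f ξ₀ = max (f γ) (f η)` has `γ, η ∈ L`, and the two
inequalities `⟪γ - ξ₀, α⟫ ≤ 0`, `⟪η - ξ₀, α⟫ ≤ 0` force `⟪γ - η, α⟫ = 0`.
-/

section SupportingHyperplane

variable {E : Type*} [NormedAddCommGroup E] [InnerProductSpace ℝ E] [FiniteDimensional ℝ E]
  {C : Set E} {x : E}

theorem Convex.exists_ne_zero_forall_inner_sub_eq_zero_of_interior_eq_empty
    (hC : Convex ℝ C) (hint : interior C = ∅) (hx : x ∈ C) :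
    ∃ α : E, α ≠ 0 ∧ ∀ y ∈ C, inner ℝ (y - x) α = 0 := by
  have hspan : affineSpan ℝ C ≠ ⊤ := fun h => by
    simpa [hint] using hC.interior_nonempty_iff_affineSpan_eq_top.2 h
  have hdir : (affineSpan ℝ C).direction ≠ ⊤ := fun h =>
    hspan ((AffineSubspace.direction_eq_top_iff_of_nonempty ⟨x, subset_affineSpan ℝ C hx⟩).1 h)
  obtain ⟨α, hα_orth, hα⟩ :=
    (Submodule.ne_bot_iff _).1 fun h => hdir (Submodule.orthogonal_eq_bot_iff.1 h)
  refine ⟨α, hα, fun y hy => (Submodule.mem_orthogonal _ α).1 hα_orth _ ?_⟩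
  exact AffineSubspace.vsub_mem_direction (subset_affineSpan ℝ C hy) (subset_affineSpan ℝ C hx)

theorem Convex.exists_ne_zero_forall_inner_sub_nonpos_of_notMem_interior
    (hC : Convex ℝ C) (hx : x ∈ C) (hxi : x ∉ interior C) :
    ∃ α : E, α ≠ 0 ∧ ∀ y ∈ C, inner ℝ (y - x) α ≤ 0 := by
  rcases (interior C).eq_empty_or_nonempty with hint | hint
  · obtain ⟨α, hα, hperp⟩ := hC.exists_ne_zero_forall_inner_sub_eq_zero_of_interior_eq_empty hint hx
    exact ⟨α, hα, fun y hy => (hperp y hy).le⟩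
  · obtain ⟨φ, hφ, hmax⟩ := geometric_hahn_banach_of_nonempty_interior_point hC hxi hint
    set α := (InnerProductSpace.toDual ℝ E).symm φ
    have hα : ∀ y, inner ℝ α y = φ y := fun y => InnerProductSpace.toDual_symm_apply
    refine ⟨α, fun h => hφ (ContinuousLinearMap.ext fun y => ?_), fun y hy => ?_⟩
    · simp [← hα y, h]
    · rw [real_inner_comm, hα, map_sub]
      linarith [hmax y hy]

end SupportingHyperplane

theorem inner_sub_eq_zero_of_inner_sub_nonpos {E : Type*} [NormedAddCommGroup E]
    [InnerProductSpace ℝ E] {x γ η α : E} {t : ℝ} (ht : t ∈ Ioo (0 : ℝ) 1)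
    (hx : x = t • γ + (1 - t) • η) (hγ : inner ℝ (γ - x) α ≤ 0) (hη : inner ℝ (η - x) α ≤ 0) :
    inner ℝ (γ - η) α = 0 := by
  have hγx : γ - x = (1 - t) • (γ - η) := by rw [hx]; module
  have hηx : η - x = (-t) • (γ - η) := by rw [hx]; module
  rw [hγx, real_inner_smul_left] at hγ
  rw [hηx, real_inner_smul_left] at hη
  obtain ⟨ht0, ht1⟩ := ht
  nlinarith

theorem exists_pos_add_smul_mem_and_sub_smul_mem_of_mem_interior {E : Type*}
    [AddCommGroup E] [TopologicalSpace E] [IsTopologicalAddGroup E] [Module ℝ E]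
    [ContinuousSMul ℝ E] {C : Set E} {x : E} (hx : x ∈ interior C) (v : E) :
    ∃ δ : ℝ, 0 < δ ∧ x + δ • v ∈ C ∧ x - δ • v ∈ C := by
  have hline : ∀ w : E, ∀ᶠ δ : ℝ in nhds 0, x + δ • w ∈ C := fun w =>
    (Continuous.tendsto' (by fun_prop) 0 x (by simp)).eventually (mem_interior_iff_mem_nhds.1 hx)
  obtain ⟨δ, hδ, hplus, hminus⟩ := ((hline v).and (hline (-v))).exists_gt
  exact ⟨δ, hδ, hplus, by simpa [sub_eq_add_neg] using hminus⟩

variable {n : ℕ} {f : EuclideanSpace ℝ (Fin n) → ℝ} {ξ₀ : EuclideanSpace ℝ (Fin n)}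

theorem LevelConvex.convex_setOf_le (hf : LevelConvex f) (c : ℝ) :
    Convex ℝ {ξ | f ξ ≤ c} := by
  intro ξ hξ η hη a b ha hb hab
  obtain rfl : b = 1 - a := by linarith
  exact (hf ξ η a ⟨ha, by linarith⟩).trans (max_le hξ hη)

theorem StrictLevelConvexAtInOneDirection.notMem_interior (hf : LevelConvex f)
    (hs : StrictLevelConvexAtInOneDirection f ξ₀) : ξ₀ ∉ interior {ξ | f ξ ≤ f ξ₀} := by
  intro hint
  obtain ⟨α, hα, hstrict⟩ := hs
  obtain ⟨δ, hδ, hγ, hη⟩ := exists_pos_add_smul_mem_and_sub_smul_mem_of_mem_interior hint α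
  have hhalf : (1 / 2 : ℝ) ∈ Ioo (0 : ℝ) 1 := by norm_num
  have hmid : ξ₀ = (1 / 2 : ℝ) • (ξ₀ + δ • α) + (1 - 1 / 2 : ℝ) • (ξ₀ - δ • α) := by module
  have hmax : f ξ₀ = max (f (ξ₀ + δ • α)) (f (ξ₀ - δ • α)) := by
    refine le_antisymm ?_ (max_le hγ hη)
    simpa only [← hmid] using hf (ξ₀ + δ • α) (ξ₀ - δ • α) _ (Ioo_subset_Icc_self hhalf)
  have hzero := hstrict _ _ _ hhalf hmid hmax
  have hdiff : ξ₀ + δ • α - (ξ₀ - δ • α) = (2 * δ) • α := by module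
  rw [hdiff, real_inner_smul_left, mul_eq_zero, inner_self_eq_zero] at hzero
  exact hzero.elim (by positivity) hα

theorem LevelConvex.strictLevelConvexAtInOneDirection_of_notMem_interior (hf : LevelConvex f)
    (hξ₀ : ξ₀ ∉ interior {ξ | f ξ ≤ f ξ₀}) : StrictLevelConvexAtInOneDirection f ξ₀ := by
  have hξ₀L : ξ₀ ∈ {ξ | f ξ ≤ f ξ₀} := by simp
  obtain ⟨α, hα, hsupp⟩ :=
    (hf.convex_setOf_le _).exists_ne_zero_forall_inner_sub_nonpos_of_notMem_interior hξ₀L hξ₀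
  refine ⟨α, hα, fun γ η t ht hcomb hmax => inner_sub_eq_zero_of_inner_sub_nonpos ht hcomb
    (hsupp γ ?_) (hsupp η ?_)⟩
  · exact (le_max_left (f γ) (f η)).trans_eq hmax.symm
  · exact (le_max_right (f γ) (f η)).trans_eq hmax.symm

theorem strictLevelConvexAtInOneDirection_iff_frontier_general {n : ℕ}
    (f : EuclideanSpace ℝ (Fin n) → ℝ)
    (hlc : LevelConvex f) (ξ₀ : EuclideanSpace ℝ (Fin n)) :
    StrictLevelConvexAtInOneDirection f ξ₀ ↔
      ξ₀ ∈ frontier {ξ : EuclideanSpace ℝ (Fin n) | f ξ ≤ f ξ₀} := by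
  rw [mem_frontier_iff_notMem_interior (show ξ₀ ∈ {ξ | f ξ ≤ f ξ₀} by simp)]
  exact ⟨(·.notMem_interior hlc), hlc.strictLevelConvexAtInOneDirection_of_notMem_interior⟩

/-- A lower semicontinuous level convex `f : ℝⁿ → ℝ` is strictly level convex at `ξ₀` in
at least one direction if and only if `ξ₀` belongs to the topological boundary of the
sublevel set `L_{f ξ₀}(f) = {ξ : f ξ ≤ f ξ₀}`. -/
theorem strictLevelConvexAtInOneDirection_iff_frontier {n : ℕ}
    (f : EuclideanSpace ℝ (Fin n) → ℝ) (hlsc : LowerSemicontinuous f)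
    (hlc : LevelConvex f) (ξ₀ : EuclideanSpace ℝ (Fin n)) :
    StrictLevelConvexAtInOneDirection f ξ₀ ↔
      ξ₀ ∈ frontier {ξ : EuclideanSpace ℝ (Fin n) | f ξ ≤ f ξ₀} :=
  strictLevelConvexAtInOneDirection_iff_frontier_general f hlc ξ₀
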